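/- arXiv:1608.01438 — 4 statements merged into one kernel-verified Lean document; each statement's English description precedes it below -/
import Mathlib

section
/- For each n ≥ 1, the number of super friendly p-watermelons of length n equals the number of vicious p-watermelons of length n. -/
/-- A directed walk of length `n`, encoded by its ordinates, frozen after time `n`. -/
def IsWalkTo (n : ℕ) (y : ℕ → ℤ) : Prop :=
  (∀ t < n, y (t + 1) = y t + 1 ∨ y (t + 1) = y t - 1) ∧ (∀ t, n ≤ t → y t = y n)

/-- A vicious `p`-watermelon of length `n`: walks start at heights `0,2,…,2(p-1)`,
end at heights `c, c+2, …, c+2(p-1)` for some `c`, with strict ordering at every time. -/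
def Vicious (p n : ℕ) (y : Fin p → ℕ → ℤ) : Prop :=
  (∀ k, IsWalkTo n (y k)) ∧
  (∀ k : Fin p, y k 0 = 2 * ((k : ℕ) : ℤ)) ∧
  (∃ c : ℤ, ∀ k : Fin p, y k n = c + 2 * ((k : ℕ) : ℤ)) ∧
  (∀ t ≤ n, ∀ j k : Fin p, j < k → y j t < y k t)

/-- A super friendly `p`-watermelon of length `n`: all walks start at the origin,
all end at the same point, with weak ordering at every time. -/
def SuperFriendly (p n : ℕ) (y : Fin p → ℕ → ℤ) : Prop :=
  (∀ k, IsWalkTo n (y k)) ∧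
  (∀ k, y k 0 = 0) ∧
  (∀ j k : Fin p, y j n = y k n) ∧
  (∀ t ≤ n, ∀ j k : Fin p, j ≤ k → y j t ≤ y k t)

/-! Adding `2k` to the `k`-th walk turns a super friendly watermelon into a vicious one. The
inverse shift works because in a vicious watermelon all heights at time `t` have the parity of
`t`, so strictly ordered neighbours are at distance at least `2`. -/

lemma isWalkTo_add_const_iff {n : ℕ} {y : ℕ → ℤ} (c : ℤ) :
    IsWalkTo n (fun t => y t + c) ↔ IsWalkTo n y := by
  simp only [IsWalkTo, add_right_cancel_iff]
  refine and_congr (forall₂_congr fun t _ => ?_) Iff.rfl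
  constructor <;> rintro (h | h) <;> omega

lemma IsWalkTo.even_sub_sub {n : ℕ} {y : ℕ → ℤ} (hy : IsWalkTo n y) {t : ℕ} (ht : t ≤ n) :
    Even (y t - y 0 - t) := by
  induction t with
  | zero => simp
  | succ t ih =>
    obtain ⟨m, hm⟩ := ih (by omega)
    rcases hy.1 t (by omega) with h | h
    · exact ⟨m, by push_cast; omega⟩
    · exact ⟨m - 1, by push_cast; omega⟩

lemma exists_forall_eq_iff_forall_eq {ι α : Type*} [Nonempty α] (f : ι → α) :
    (∃ c, ∀ i, f i = c) ↔ ∀ i j, f i = f j := by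
  refine ⟨fun ⟨c, hc⟩ i j => (hc i).trans (hc j).symm, fun h => ?_⟩
  rcases isEmpty_or_nonempty ι with hι | ⟨⟨i⟩⟩
  · exact ⟨Classical.arbitrary α, isEmptyElim⟩
  · exact ⟨f i, fun j => h j i⟩

lemma monotone_sub_two_mul_of_strictMono {p : ℕ} {f : Fin p → ℤ} (hf : StrictMono f)
    (hpar : ∀ j k, Even (f k - f j)) : Monotone fun k => f k - 2 * (k : ℕ) := by
  cases p with
  | zero => exact Subsingleton.monotone _
  | succ p =>
    refine Fin.monotone_iff_le_succ.mpr fun i => ?_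
    -- consecutive values differ by a positive even number
    have hlt := hf (Fin.castSucc_lt_succ (i := i))
    obtain ⟨r, hr⟩ := hpar i.castSucc i.succ
    simp only [Fin.val_castSucc, Fin.val_succ]
    push_cast
    omega

def stagger (p : ℕ) : Fin p → ℕ → ℤ := fun k _ => 2 * (k : ℕ)

lemma strictMono_stagger (p t : ℕ) : StrictMono fun k => stagger p k t := by
  intro j k hjk
  simp only [stagger]
  have : (j : ℕ) < k := hjk
  omega

lemma Vicious.even_sub {p n : ℕ} {y : Fin p → ℕ → ℤ} (hy : Vicious p n y) {t : ℕ} (ht : t ≤ n)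
    (j k : Fin p) : Even (y k t - y j t) := by
  obtain ⟨a, ha⟩ := (hy.1 j).even_sub_sub ht
  obtain ⟨b, hb⟩ := (hy.1 k).even_sub_sub ht
  rw [hy.2.1 j] at ha
  rw [hy.2.1 k] at hb
  exact ⟨b - a + k - j, by omega⟩

theorem superFriendly_iff_vicious_add_stagger {p n : ℕ} {y : Fin p → ℕ → ℤ} :
    SuperFriendly p n y ↔ Vicious p n (y + stagger p) := by
  have hwalk : ∀ k, IsWalkTo n ((y + stagger p) k) ↔ IsWalkTo n (y k) := fun k =>
    isWalkTo_add_const_iff (y := y k) _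
  have hstart : ∀ k : Fin p, (y + stagger p) k 0 = 2 * (k : ℕ) ↔ y k 0 = 0 := fun k => by
    simp [stagger]
  have hend : (∃ c : ℤ, ∀ k : Fin p, (y + stagger p) k n = c + 2 * (k : ℕ)) ↔
      ∀ j k : Fin p, y j n = y k n := by
    simp only [Pi.add_apply, stagger, add_left_inj]
    exact exists_forall_eq_iff_forall_eq _
  refine ⟨fun ⟨hw, h0, hn, hord⟩ => ⟨fun k => (hwalk k).2 (hw k), fun k => (hstart k).2 (h0 k),
    hend.2 hn, fun t ht => ?_⟩, fun hvic => ⟨fun k => (hwalk k).1 (hvic.1 k),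
    fun k => (hstart k).1 (hvic.2.1 k), hend.1 hvic.2.2.1, fun t ht j k hjk => ?_⟩⟩
  · exact Monotone.add_strictMono (hord t ht) (strictMono_stagger p t)
  · have := monotone_sub_two_mul_of_strictMono (hvic.2.2.2 t ht) (hvic.even_sub ht) hjk
    simpa [stagger] using this

theorem superFriendly_card_eq_vicious_card_general (p n : ℕ) :
    Nat.card {y : Fin p → ℕ → ℤ // SuperFriendly p n y} =
      Nat.card {y : Fin p → ℕ → ℤ // Vicious p n y} :=
  Nat.card_congr <| (Equiv.addRight (stagger p)).subtypeEquiv fun _ =>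
    superFriendly_iff_vicious_add_stagger

/-- For each `n ≥ 1`, super friendly and vicious `p`-watermelons of length `n`
are equinumerous. -/
theorem superFriendly_card_eq_vicious_card (p n : ℕ) (hn : 1 ≤ n) :
    Nat.card {y : Fin p → ℕ → ℤ // SuperFriendly p n y} =
      Nat.card {y : Fin p → ℕ → ℤ // Vicious p n y} :=
  superFriendly_card_eq_vicious_card_general p n
end

section
/- Let V(x) be a formal power series with V(0)=1 satisfying x^2(1+x)(1-8x) V'' + x(8-42x-32x^2) V' + (12-40x-16x^2) V = 12, and define F(x) = 2(1-x) - 1/V(x). Then F satisfies the algebraic differential equation: x^2(1+x)(1-8x) F''·F - 2x^2(1-x^2)(1-8x) F'' - 2x^2(1+x)(1-8x)(F')^2 + 2x(4-21x-16x^2) F'·F - 4x(4-23x-9x^2) F' - 12 F^3 + (60-32x+16x^2) F^2 - (96-96x+132x^2) F + (48-64x+176x^2-48x^3) = 0. -/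
/-!
With `R = -1/V` one has `V' = R'/R²` and `V'' = R''/R² - 2R'²/R³`, so multiplying the linear
equation `a V'' + b V' + c V = 12` by `R³` gives the polynomial equation
`a (R'' R - 2 R'²) + b R' R - c R² - 12 R³ = 0`. Since `F = R + 2(1 - x)`, `F' = R' - 2` and
`F'' = R''`, the claimed equation is this one rewritten in terms of `F`.
-/

open PowerSeries

namespace Derivation

variable {R A : Type*} [CommRing R] [CommRing A] [Algebra R A] (D : Derivation R A A) {v r : A}

theorem map_eq_sq_mul_of_mul_eq_neg_one (h : r * v = -1) : D r = r ^ 2 * D v := by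
  have h' : -r * v = 1 := by rw [neg_mul, h, neg_neg]
  have := D.leibniz_of_mul_eq_one h'
  rw [map_neg, smul_eq_mul] at this
  linear_combination -this

theorem map_map_eq_of_mul_eq_neg_one (h : r * v = -1) :
    D (D r) = 2 * r ^ 3 * D v ^ 2 + r ^ 2 * D (D v) := by
  rw [D.map_eq_sq_mul_of_mul_eq_neg_one h, leibniz, leibniz_pow,
    D.map_eq_sq_mul_of_mul_eq_neg_one h]
  simp only [smul_eq_mul, nsmul_eq_mul, Nat.cast_ofNat, Nat.add_one_sub_one, pow_one]
  ring

theorem neg_inv_of_linear_ode {a b c k : A} (h : r * v = -1)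
    (hode : a * D (D v) + b * D v + c * v = k) :
    a * D (D r) * r - 2 * a * D r ^ 2 + b * D r * r - c * r ^ 2 - k * r ^ 3 = 0 := by
  rw [D.map_map_eq_of_mul_eq_neg_one h, D.map_eq_sq_mul_of_mul_eq_neg_one h]
  linear_combination r ^ 3 * hode - c * r ^ 2 * h

end Derivation

/-- If `V(0) = 1` satisfies the vicious 3-watermelon ODE and `F = 2(1-x) - 1/V`,
then `F` satisfies the stated algebraic differential equation. -/
theorem friendly3_dalgebraic (V : ℚ⟦X⟧)
    (h0 : constantCoeff V = 1)
    (hode : X ^ 2 * (1 + X) * (1 - 8 * X) * (derivative ℚ (derivative ℚ V)) +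
      X * (8 - 42 * X - 32 * X ^ 2) * (derivative ℚ V) +
      (12 - 40 * X - 16 * X ^ 2) * V = 12) :
    let F : ℚ⟦X⟧ := 2 * (1 - X) - V⁻¹
    X ^ 2 * (1 + X) * (1 - 8 * X) * (derivative ℚ (derivative ℚ F)) * F -
      2 * X ^ 2 * (1 - X ^ 2) * (1 - 8 * X) * (derivative ℚ (derivative ℚ F)) -
      2 * X ^ 2 * (1 + X) * (1 - 8 * X) * (derivative ℚ F) ^ 2 +
      2 * X * (4 - 21 * X - 16 * X ^ 2) * (derivative ℚ F) * F -
      4 * X * (4 - 23 * X - 9 * X ^ 2) * (derivative ℚ F) -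
      12 * F ^ 3 + (60 - 32 * X + 16 * X ^ 2) * F ^ 2 -
      (96 - 96 * X + 132 * X ^ 2) * F +
      (48 - 64 * X + 176 * X ^ 2 - 48 * X ^ 3) = 0 := by
  intro F
  set R : ℚ⟦X⟧ := -V⁻¹ with hRdef
  have hRV : R * V = -1 := by
    rw [hRdef, neg_mul, PowerSeries.inv_mul_cancel V (by simp [h0])]
  have hR := (derivative ℚ).neg_inv_of_linear_ode hRV hode
  have hF : F = R + 2 * (1 - X) := by simp only [F, hRdef]; ring
  have hd2 : derivative ℚ (2 : ℚ⟦X⟧) = 0 := by exact_mod_cast (derivative ℚ).map_natCast 2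
  have hF' : derivative ℚ F = derivative ℚ R - 2 := by
    rw [hF, map_add, Derivation.leibniz, map_sub, Derivation.map_one_eq_zero, derivative_X, hd2,
      smul_eq_mul, smul_eq_mul]
    ring
  have hF'' : derivative ℚ (derivative ℚ F) = derivative ℚ (derivative ℚ R) := by
    rw [hF', map_sub, hd2, sub_zero]
  rw [hF'', hF', hF]
  linear_combination hR
end

section
/- Let H(z) = ₂F₁([1/3, 2/3], [1]; z) = Σ_{n≥0} ((1/3)_n (2/3)_n / (n!)^2) z^n as a formal power series, and let A(x) = 27x^2/(1-2x)^3 and B(x) = 27x/(1+4x)^3, both regarded as elements of x·Q[[x]]. Then (1/(1-2x))·H(A(x)) = (1/(1+4x))·H(B(x)) as formal power series in Q[[x]]. -/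
/-!
Write `c = 2, j = 2` for the left side and `c = -4, j = 1` for the right side. Expanding
`H(27 xʲ/(1-cx)³)` termwise, the `N`-th coefficient of `(1-cx)⁻¹ H(27 xʲ/(1-cx)³)` is the finite
sum `∑ₖ (3k)!/k!³ · C(N+(3-j)k, 3k) · c^(N-jk)`. Zeilberger's algorithm gives, for each of the two
sums, a certificate proving by creative telescoping that it satisfies the Franel recurrence
`(N+2)² u(N+2) = (7N²+21N+16) u(N+1) + 8(N+1)² u(N)`. Both sums start with `1, 2`, so they agree:
both sides are the generating function of the Franel numbers `∑ₖ C(n,k)³`.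
-/

open PowerSeries

/-- Formal composition `f ∘ g` of power series, valid when `g` has zero constant
term (coefficients of `gᵏ` for `k > n` do not contribute to the coefficient of
`xⁿ` in that case). -/
noncomputable def psComp (f g : ℚ⟦X⟧) : ℚ⟦X⟧ :=
  PowerSeries.mk fun n =>
    ∑ k ∈ Finset.range (n + 1), coeff k f * coeff n (g ^ k)

/-- The hypergeometric series `₂F₁([1/3,2/3],[1]; z) = Σ (1/3)ₙ(2/3)ₙ/(n!)² zⁿ`. -/
noncomputable def hyp2F1 : ℚ⟦X⟧ :=
  PowerSeries.mk fun n =>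
    (ascPochhammer ℚ n).eval (1 / 3) * (ascPochhammer ℚ n).eval (2 / 3) /
      ((n.factorial : ℚ)) ^ 2

open Finset Nat

theorem ascPochhammer_eval_natCast_add_one {S : Type*} [Semiring S] (n m : ℕ) :
    (ascPochhammer S m).eval ((n : S) + 1) = m ! * (n + m).choose m := by
  rw [← Nat.cast_add_one, ← cast_ascFactorial, ascFactorial_eq_factorial_mul_choose]
  push_cast; rfl

theorem ascPochhammer_eval_add_add {S : Type*} [CommSemiring S] (l n r : ℕ) (a : S) :
    (ascPochhammer S (l + n + r)).eval a =
      (ascPochhammer S l).eval a * (ascPochhammer S n).eval (a + l) *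
        (ascPochhammer S r).eval (a + l + n) := by
  simp only [← ascPochhammer_mul, Polynomial.eval_mul, Polynomial.eval_comp, Polynomial.eval_add,
    Polynomial.eval_X, Polynomial.eval_natCast, add_assoc, mul_assoc]

theorem ascPochhammer_eval_two {S : Type*} [Semiring S] (a : S) :
    (ascPochhammer S 2).eval a = a * (a + 1) := by
  simp [ascPochhammer_succ_eval]

namespace PowerSeries

variable {K : Type*} [Field K]

theorem inv_one_sub_C_mul_X (c : K) : (1 - C c * X : K⟦X⟧)⁻¹ = rescale c (mk 1) := by
  rw [inv_eq_iff_mul_eq_one (by simp), ← rescale_X, ← map_one (rescale c), ← map_sub,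
    ← map_mul, mk_one_mul_one_sub_eq_one, map_one]

theorem coeff_inv_one_sub_C_mul_X_pow (c : K) (d n : ℕ) :
    coeff n ((1 - C c * X : K⟦X⟧)⁻¹ ^ (d + 1)) = (d + n).choose d * c ^ n := by
  rw [inv_one_sub_C_mul_X, ← map_pow, mk_one_pow_eq_mk_choose_add, coeff_rescale, coeff_mk,
    mul_comm]

end PowerSeries

theorem coeff_mul_psComp (u f g : ℚ⟦X⟧) (hg : constantCoeff g = 0) (N : ℕ) :
    coeff N (u * psComp f g) = ∑ k ∈ range (N + 1), coeff k f * coeff N (u * g ^ k) := by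
  have hgk : ∀ k n, n < k → coeff n (g ^ k) = 0 := by
    intro k n hn
    obtain ⟨q, hq⟩ := pow_dvd_pow_of_dvd (X_dvd_iff.mpr hg) k
    rw [hq, coeff_X_pow_mul', if_neg (by omega)]
  simp_rw [coeff_mul, psComp, coeff_mk, mul_sum]
  rw [sum_comm]
  refine sum_congr rfl fun p hp => ?_
  rw [HasAntidiagonal.mem_antidiagonal] at hp
  refine (sum_subset (range_subset_range.mpr (by omega)) fun k _ hk => ?_).trans
    (sum_congr rfl fun k _ => by ring)
  rw [mem_range, not_lt] at hk
  rw [hgk k p.2 (by omega), mul_zero, mul_zero]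

theorem coeff_hyp2F1_mul_pow (k : ℕ) : coeff k hyp2F1 * 27 ^ k = (3 * k)! / (k ! : ℚ) ^ 3 := by
  rw [eq_div_iff (by positivity), hyp2F1, coeff_mk]
  induction k with
  | zero => simp
  | succ k ih =>
    rw [show 3 * (k + 1) = 3 * k + 1 + 1 + 1 by ring]
    simp only [factorial_succ, ascPochhammer_succ_eval, cast_mul] at ih ⊢
    field_simp at ih ⊢
    push_cast
    linear_combination 27 * ((k : ℚ) + 1) * (3 * k + 1) * (3 * k + 2) * ih

-- `(3k)!/k!³ · C(N+(3-j)k, 3k) · c^(N-jk)` written as a hypergeometric term: for `j ≤ 3` the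
-- Pochhammer factor vanishes exactly when `jk > N`, and `c ^ N / c ^ (j * k)` needs `c ≠ 0`.
noncomputable def pullbackTerm (j : ℕ) (c : ℚ) (N k : ℕ) : ℚ :=
  (ascPochhammer ℚ (3 * k)).eval ((N : ℚ) - j * k + 1) * c ^ N / (c ^ (j * k) * (k ! : ℚ) ^ 3)

noncomputable def pullbackSeq (j : ℕ) (c : ℚ) (N : ℕ) : ℚ :=
  ∑ k ∈ range (N + 1), pullbackTerm j c N k

theorem pullbackTerm_eq_zero {j N k : ℕ} (c : ℚ) (hj : j ≤ 3) (h : N < j * k) :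
    pullbackTerm j c N k = 0 := by
  have hzero : (ascPochhammer ℚ (3 * k)).eval ((N : ℚ) - j * k + 1) = 0 := by
    rw [ascPochhammer_eval_eq_zero_iff]
    have := Nat.mul_le_mul_right k hj
    refine ⟨j * k - (N + 1), by omega, ?_⟩
    push_cast [Nat.cast_sub (show N + 1 ≤ j * k by omega)]
    ring
  rw [pullbackTerm, hzero, zero_mul, zero_div]

theorem coeff_inv_mul_psComp_pullback {j : ℕ} {c : ℚ} (hj₀ : 1 ≤ j) (hj : j ≤ 3) (hc : c ≠ 0)
    (N : ℕ) :
    coeff N ((1 - C c * X)⁻¹ * psComp hyp2F1 (27 * X ^ j * ((1 - C c * X)⁻¹) ^ 3)) =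
      pullbackSeq j c N := by
  rw [coeff_mul_psComp _ _ _ (by simp [show j ≠ 0 by omega]), pullbackSeq]
  refine sum_congr rfl fun k _ => ?_
  have hmonomial : (1 - C c * X)⁻¹ * (27 * X ^ j * ((1 - C c * X)⁻¹) ^ 3) ^ k =
      C (27 ^ k) * (X ^ (j * k) * ((1 - C c * X)⁻¹) ^ (3 * k + 1)) := by
    rw [map_pow, ← map_ofNat C 27]; ring
  rw [hmonomial, coeff_C_mul, coeff_X_pow_mul', ← mul_assoc, coeff_hyp2F1_mul_pow]
  split_ifs with hjk
  · rw [coeff_inv_one_sub_C_mul_X_pow, pullbackTerm,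
      show (N : ℚ) - j * k + 1 = ((N - j * k : ℕ) : ℚ) + 1 by push_cast [Nat.cast_sub hjk]; ring,
      ascPochhammer_eval_natCast_add_one, pow_sub₀ _ hc hjk, add_comm (N - j * k)]
    field_simp
  · rw [mul_zero, pullbackTerm_eq_zero c hj (by omega)]

-- Zeilberger's certificate for the Franel recurrence of `pullbackSeq j c`; `a` and `b` depend on
-- the pullback.
noncomputable def pullbackCert (j : ℕ) (c a b : ℚ) (N k : ℕ) : ℚ :=
  a * k ^ 3 * (3 * N + b) * (ascPochhammer ℚ (3 * k - 2)).eval ((N : ℚ) - j * k + 3) * c ^ N /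
    (c ^ (j * k) * (k ! : ℚ) ^ 3)

section Window

/- At `k = m + 1` all terms of the telescoping identity share the Pochhammer factor
`(N - j(m+1) + 3)_(3m+1)`; these lemmas split it off. -/

variable (j : ℕ) (c : ℚ) (N m : ℕ)

theorem pullbackTerm_succ {i : ℕ} (hi : i ≤ 2) :
    pullbackTerm j c (N + i) (m + 1) =
      (ascPochhammer ℚ (2 - i)).eval ((N : ℚ) - j * (m + 1) + 3 - (2 - i : ℕ)) *
        (ascPochhammer ℚ (3 * m + 1)).eval ((N : ℚ) - j * (m + 1) + 3) *
        (ascPochhammer ℚ i).eval ((N : ℚ) - j * (m + 1) + 3 + (3 * m + 1 : ℕ)) *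
        c ^ (N + i) / (c ^ (j * (m + 1)) * ((m + 1)! : ℚ) ^ 3) := by
  rw [pullbackTerm, show 3 * (m + 1) = (2 - i) + (3 * m + 1) + i by omega,
    ascPochhammer_eval_add_add]
  push_cast [Nat.cast_sub hi]
  ring_nf

theorem pullbackCert_succ (a b : ℚ) :
    pullbackCert j c a b N (m + 1) =
      a * (m + 1) ^ 3 * (3 * N + b) *
        (ascPochhammer ℚ (3 * m + 1)).eval ((N : ℚ) - j * (m + 1) + 3) * c ^ N /
        (c ^ (j * (m + 1)) * ((m + 1)! : ℚ) ^ 3) := by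
  rw [pullbackCert, show 3 * (m + 1) - 2 = 3 * m + 1 by omega]
  push_cast; ring_nf

theorem pullbackCert_succ_succ (hj : j ≤ 3) (a b : ℚ) :
    pullbackCert j c a b N (m + 2) =
      a * (m + 2) ^ 3 * (3 * N + b) *
        (ascPochhammer ℚ j).eval ((N : ℚ) - j * (m + 1) + 3 - j) *
        (ascPochhammer ℚ (3 * m + 1)).eval ((N : ℚ) - j * (m + 1) + 3) *
        (ascPochhammer ℚ (3 - j)).eval ((N : ℚ) - j * (m + 1) + 3 + (3 * m + 1 : ℕ)) *
        c ^ N / (c ^ (j * (m + 2)) * ((m + 2)! : ℚ) ^ 3) := by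
  rw [pullbackCert, show 3 * (m + 2) - 2 = j + (3 * m + 1) + (3 - j) by omega,
    ascPochhammer_eval_add_add]
  push_cast
  ring_nf

end Window

theorem pullbackTerm_two_two_telescope (N k : ℕ) :
    ((N : ℚ) + 2) ^ 2 * pullbackTerm 2 2 (N + 2) k -
        (7 * (N : ℚ) ^ 2 + 21 * N + 16) * pullbackTerm 2 2 (N + 1) k -
        8 * ((N : ℚ) + 1) ^ 2 * pullbackTerm 2 2 N k =
      pullbackCert 2 2 (-24) 4 N (k + 1) - pullbackCert 2 2 (-24) 4 N k := by
  rcases k with _ | m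
  · simp only [pullbackTerm, pullbackCert, zero_add, mul_zero, mul_one, Nat.reduceSub,
      Nat.cast_zero, Nat.cast_one, ascPochhammer_zero, ascPochhammer_one, Polynomial.eval_one,
      Polynomial.eval_X, pow_zero, factorial_zero, factorial_one]
    ring
  · have h₀ := pullbackTerm_succ 2 2 N m (i := 0) (by norm_num)
    rw [add_zero] at h₀
    rw [h₀, pullbackTerm_succ 2 2 N m (i := 1) (by norm_num),
      pullbackTerm_succ 2 2 N m (i := 2) (by norm_num),
      pullbackCert_succ_succ 2 2 N m (by norm_num),
      pullbackCert_succ, factorial_succ (m + 1)]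
    simp only [Nat.reduceSub, ascPochhammer_zero, ascPochhammer_one, ascPochhammer_eval_two,
      Polynomial.eval_one, Polynomial.eval_X]
    push_cast
    field_simp
    ring

theorem pullbackTerm_one_neg_four_telescope (N k : ℕ) :
    ((N : ℚ) + 2) ^ 2 * pullbackTerm 1 (-4) (N + 2) k -
        (7 * (N : ℚ) ^ 2 + 21 * N + 16) * pullbackTerm 1 (-4) (N + 1) k -
        8 * ((N : ℚ) + 1) ^ 2 * pullbackTerm 1 (-4) N k =
      pullbackCert 1 (-4) (-48) 5 N (k + 1) - pullbackCert 1 (-4) (-48) 5 N k := by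
  rcases k with _ | m
  · simp only [pullbackTerm, pullbackCert, zero_add, mul_zero, mul_one, Nat.reduceSub,
      Nat.cast_zero, Nat.cast_one, ascPochhammer_zero, ascPochhammer_one, Polynomial.eval_one,
      Polynomial.eval_X, pow_zero, factorial_zero, factorial_one]
    ring
  · have h₀ := pullbackTerm_succ 1 (-4) N m (i := 0) (by norm_num)
    rw [add_zero] at h₀
    rw [h₀, pullbackTerm_succ 1 (-4) N m (i := 1) (by norm_num),
      pullbackTerm_succ 1 (-4) N m (i := 2) (by norm_num),
      pullbackCert_succ_succ 1 (-4) N m (by norm_num),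
      pullbackCert_succ, factorial_succ (m + 1)]
    simp only [Nat.reduceSub, ascPochhammer_zero, ascPochhammer_one, ascPochhammer_eval_two,
      Polynomial.eval_one, Polynomial.eval_X]
    push_cast
    field_simp
    ring

section Recurrence

variable {R : Type*} [Ring R] (p q r : ℕ → R)

theorem sum_recurrence_of_telescope {F G : ℕ → ℕ → R} (hF : ∀ N k, N < k → F N k = 0)
    (hG₀ : ∀ N, G N 0 = 0) (hG : ∀ N, G N (N + 3) = 0)
    (htel : ∀ N k, p N * F (N + 2) k - q N * F (N + 1) k - r N * F N k = G N (k + 1) - G N k)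
    (N : ℕ) :
    p N * ∑ k ∈ range (N + 3), F (N + 2) k =
      q N * ∑ k ∈ range (N + 2), F (N + 1) k + r N * ∑ k ∈ range (N + 1), F N k := by
  have hextend : ∀ n, n ≤ N + 2 → ∑ k ∈ range (n + 1), F n k = ∑ k ∈ range (N + 3), F n k :=
    fun n hn => sum_subset (range_subset_range.mpr (by omega)) fun k _ hk =>
      hF n k (by simpa using hk)
  rw [hextend (N + 1) (by omega), hextend N (by omega), ← sub_eq_zero, mul_sum, mul_sum, mul_sum,
    ← sum_add_distrib, ← sum_sub_distrib]
  simp_rw [sub_add_eq_sub_sub, htel]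
  rw [sum_range_sub, hG, hG₀, sub_zero]

theorem eq_of_recurrence {u v : ℕ → R} [IsLeftCancelMulZero R] (hp : ∀ n, p n ≠ 0)
    (hu : ∀ n, p n * u (n + 2) = q n * u (n + 1) + r n * u n)
    (hv : ∀ n, p n * v (n + 2) = q n * v (n + 1) + r n * v n)
    (h₀ : u 0 = v 0) (h₁ : u 1 = v 1) : u = v := by
  funext n
  induction n using Nat.strong_induction_on with
  | _ n ih =>
    match n, ih with
    | 0, _ => exact h₀
    | 1, _ => exact h₁
    | n + 2, ih =>
      refine mul_left_cancel₀ (hp n) ?_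
      rw [hu, hv, ih n (by omega), ih (n + 1) (by omega)]

end Recurrence

theorem pullbackCert_zero (j : ℕ) (c a b : ℚ) (N : ℕ) : pullbackCert j c a b N 0 = 0 := by
  simp [pullbackCert]

theorem pullbackCert_add_three {j : ℕ} (hj₀ : 1 ≤ j) (hj : j ≤ 3) (c a b : ℚ) (N : ℕ) :
    pullbackCert j c a b N (N + 3) = 0 := by
  have hzero : (ascPochhammer ℚ (3 * (N + 3) - 2)).eval ((N : ℚ) - j * ↑(N + 3) + 3) = 0 := by
    rw [ascPochhammer_eval_eq_zero_iff]
    have := Nat.mul_le_mul_right (N + 3) hj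
    refine ⟨j * (N + 3) - (N + 3), by omega, ?_⟩
    push_cast [Nat.cast_sub (Nat.le_mul_of_pos_left (N + 3) hj₀)]
    ring
  rw [pullbackCert, hzero, mul_zero, zero_mul, zero_div]

theorem pullbackSeq_zero (j : ℕ) (c : ℚ) : pullbackSeq j c 0 = 1 := by
  simp [pullbackSeq, pullbackTerm]

theorem pullbackSeq_recurrence {j : ℕ} (hj₀ : 1 ≤ j) (hj : j ≤ 3) {c a b : ℚ}
    (htel : ∀ N k : ℕ, ((N : ℚ) + 2) ^ 2 * pullbackTerm j c (N + 2) k -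
        (7 * (N : ℚ) ^ 2 + 21 * N + 16) * pullbackTerm j c (N + 1) k -
        8 * ((N : ℚ) + 1) ^ 2 * pullbackTerm j c N k =
      pullbackCert j c a b N (k + 1) - pullbackCert j c a b N k) (N : ℕ) :
    ((N : ℚ) + 2) ^ 2 * pullbackSeq j c (N + 2) =
      (7 * (N : ℚ) ^ 2 + 21 * N + 16) * pullbackSeq j c (N + 1) +
        8 * ((N : ℚ) + 1) ^ 2 * pullbackSeq j c N :=
  sum_recurrence_of_telescope (fun N => ((N : ℚ) + 2) ^ 2)
    (fun N => 7 * (N : ℚ) ^ 2 + 21 * N + 16) (fun N => 8 * ((N : ℚ) + 1) ^ 2)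
    (fun _ _ hk => pullbackTerm_eq_zero c hj (lt_of_lt_of_le hk (Nat.le_mul_of_pos_left _ hj₀)))
    (pullbackCert_zero j c a b) (pullbackCert_add_three hj₀ hj c a b) htel N

theorem pullbackSeq_two_two_eq_one_neg_four : pullbackSeq 2 2 = pullbackSeq 1 (-4) :=
  eq_of_recurrence (fun N => ((N : ℚ) + 2) ^ 2) (fun N => 7 * (N : ℚ) ^ 2 + 21 * N + 16)
    (fun N => 8 * ((N : ℚ) + 1) ^ 2) (fun _ => by positivity)
    (pullbackSeq_recurrence (by norm_num) (by norm_num) pullbackTerm_two_two_telescope)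
    (pullbackSeq_recurrence (by norm_num) (by norm_num) pullbackTerm_one_neg_four_telescope)
    (by rw [pullbackSeq_zero, pullbackSeq_zero])
    (by norm_num [pullbackSeq, pullbackTerm, sum_range_succ, ascPochhammer_succ_eval])

/-- With pullbacks `A(x) = 27x²/(1-2x)³` and `B(x) = 27x/(1+4x)³`, one has the
identity `H(A(x))/(1-2x) = H(B(x))/(1+4x)` for `H = ₂F₁([1/3,2/3],[1]; ·)`. -/
theorem hyp2F1_pullback_identity :
    let A : ℚ⟦X⟧ := 27 * X ^ 2 * ((1 - 2 * X)⁻¹) ^ 3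
    let B : ℚ⟦X⟧ := 27 * X * ((1 + 4 * X)⁻¹) ^ 3
    (1 - 2 * X)⁻¹ * psComp hyp2F1 A = (1 + 4 * X)⁻¹ * psComp hyp2F1 B := by
  intro A B
  have hA : (1 - 2 * X : ℚ⟦X⟧) = 1 - C 2 * X := by rw [map_ofNat]
  have hB : (1 + 4 * X : ℚ⟦X⟧) = 1 - C (-4) * X := by rw [map_neg, map_ofNat]; ring
  have hcoeffB := coeff_inv_mul_psComp_pullback (j := 1) le_rfl (by norm_num) (c := -4)
    (by norm_num)
  rw [pow_one] at hcoeffB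
  ext N
  simp only [A, B]
  rw [hA, hB, coeff_inv_mul_psComp_pullback (by norm_num) (by norm_num) (by norm_num), hcoeffB,
    pullbackSeq_two_two_eq_one_neg_four]
end

section
/- The formal power series H(x) = ₂F₁([1/3,2/3],[1]; 27x^2/(1-2x)^3) ∈ Q[[x]] satisfies the linear differential equation x(1+x)(1-8x)(1-2x)^2 H'' + (1-2x)(1 - 12x - 24x^2 + 16x^3) H' - 24x(1+x) H = 0. -/
/-!
Composition with the pullback `g = 27x²/(1-2x)³`, which has zero constant term, is Mathlib's
`PowerSeries.subst`, so for `F = ₂F₁(1/3, 2/3; 1)` the chain rule gives `H' = F'(g) g'` and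
`H'' = F''(g) g'² + F'(g) g''`.
Since `g' = 54x(1+x)/(1-2x)⁴` and `1 - g = (1+x)²(1-8x)/(1-2x)³`, the left-hand side of the
equation is `12x(1+x)` times `9g(1-g) F''(g) + 9(1-2g) F'(g) - 2F(g)`, which vanishes because `F`
satisfies the hypergeometric equation.
-/

open PowerSeries

theorem psComp_eq_subst (f : ℚ⟦X⟧) {g : ℚ⟦X⟧} (hg : constantCoeff g = 0) :
    psComp f g = f.subst g := by
  ext n
  rw [psComp, coeff_mk, coeff_subst' (HasSubst.of_constantCoeff_zero' hg),
    finsum_eq_sum_of_support_subset _ (s := Finset.range (n + 1))]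
  · simp only [smul_eq_mul]
  · intro k hk
    contrapose! hk
    have hnk : (n : ℕ∞) < (g ^ k).order :=
      lt_of_lt_of_le (by simpa using hk) (le_order_pow_of_constantCoeff_eq_zero k hg)
    simp [coeff_of_lt_order n hnk]

section CommRing

variable {R : Type*} [CommRing R]

theorem derivative_ofNat (n : ℕ) [n.AtLeastTwo] : d⁄dX R (ofNat(n) : R⟦X⟧) = 0 := by
  exact_mod_cast (d⁄dX R).map_natCast n

theorem derivative_derivative_subst {f g : R⟦X⟧} (hg : HasSubst g) :
    d⁄dX R (d⁄dX R (f.subst g)) =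
      (d⁄dX R (d⁄dX R f)).subst g * d⁄dX R g ^ 2 +
        (d⁄dX R f).subst g * d⁄dX R (d⁄dX R g) := by
  rw [derivative_subst hg, Derivation.leibniz, derivative_subst hg, smul_eq_mul, smul_eq_mul]
  ring

theorem hypergeometric_ode_of_coeff_succ {f : R⟦X⟧} {a b c : R}
    (h : ∀ n : ℕ, (n + 1) * (n + c) * coeff (n + 1) f = (n + a) * (n + b) * coeff n f) :
    X * (1 - X) * d⁄dX R (d⁄dX R f) + (C c - C (a + b + 1) * X) * d⁄dX R f
      - C (a * b) * f = 0 := by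
  ext n
  rw [show X * (1 - X) * d⁄dX R (d⁄dX R f) + (C c - C (a + b + 1) * X) * d⁄dX R f
      - C (a * b) * f =
        X * (d⁄dX R (d⁄dX R f) - X * d⁄dX R (d⁄dX R f) - C (a + b + 1) * d⁄dX R f)
          + C c * d⁄dX R f - C (a * b) * f by ring]
  have hn := h n
  rcases n with _ | _ | n <;>
    simp only [map_add, map_sub, add_mul, coeff_C_mul, coeff_derivative, coeff_succ_X_mul,
      coeff_zero_X_mul, map_zero] <;>
    push_cast at hn ⊢ <;>
    linear_combination hn

end CommRing

theorem hyp2F1_coeff_succ (n : ℕ) :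
    (n + 1) * (n + 1) * coeff (n + 1) hyp2F1 = (n + 1 / 3) * (n + 2 / 3) * coeff n hyp2F1 := by
  have hfac : (n.factorial : ℚ) ≠ 0 := by positivity
  simp only [hyp2F1, coeff_mk, ascPochhammer_succ_eval, Nat.factorial_succ, Nat.cast_mul]
  push_cast
  field_simp
  ring

theorem hyp2F1_ode :
    9 * X * (1 - X) * d⁄dX ℚ (d⁄dX ℚ hyp2F1) + 9 * (1 - 2 * X) * d⁄dX ℚ hyp2F1
      - 2 * hyp2F1 = 0 := by
  have h := hypergeometric_ode_of_coeff_succ hyp2F1_coeff_succ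
  norm_num at h
  have hC2 : (C 2 : ℚ⟦X⟧) = 2 := map_ofNat C 2
  have hC29 : 9 * (C (2 / 9) : ℚ⟦X⟧) = 2 := by
    rw [← hC2, ← map_ofNat C 9, ← map_mul]
    norm_num
  linear_combination 9 * h + 9 * X * d⁄dX ℚ hyp2F1 * hC2 + hyp2F1 * hC29

section Pullback

theorem derivative_inv_one_sub_two_mul_X :
    d⁄dX ℚ (1 - 2 * X : ℚ⟦X⟧)⁻¹ = 2 * (1 - 2 * X : ℚ⟦X⟧)⁻¹ ^ 2 := by
  rw [derivative_inv', map_sub, Derivation.leibniz, derivative_ofNat 2, derivative_X,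
    Derivation.map_one_eq_zero]
  simp only [smul_eq_mul]
  ring

theorem derivative_pullback :
    d⁄dX ℚ (27 * X ^ 2 * (1 - 2 * X : ℚ⟦X⟧)⁻¹ ^ 3) =
      54 * X * (1 + X) * (1 - 2 * X : ℚ⟦X⟧)⁻¹ ^ 4 := by
  have hu : (1 - 2 * X : ℚ⟦X⟧) * (1 - 2 * X)⁻¹ = 1 :=
    PowerSeries.mul_inv_cancel _ (by simp)
  simp only [Derivation.leibniz, Derivation.leibniz_pow, derivative_inv_one_sub_two_mul_X,
    derivative_X, derivative_ofNat, smul_eq_mul, nsmul_eq_mul]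
  grind

theorem derivative_derivative_pullback :
    d⁄dX ℚ (54 * X * (1 + X) * (1 - 2 * X : ℚ⟦X⟧)⁻¹ ^ 4) =
      54 * (1 + 2 * X) * (1 - 2 * X : ℚ⟦X⟧)⁻¹ ^ 4 +
        432 * X * (1 + X) * (1 - 2 * X)⁻¹ ^ 5 := by
  simp only [Derivation.leibniz, Derivation.leibniz_pow, derivative_inv_one_sub_two_mul_X,
    derivative_X, derivative_ofNat, smul_eq_mul, nsmul_eq_mul, map_add,
    Derivation.map_one_eq_zero]
  ring

variable {R : Type*} [CommRing R]

theorem pullback_leading_coeff_identity (x u : R) (hu : (1 - 2 * x) * u = 1) :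
    x * (1 + x) * (1 - 8 * x) * (1 - 2 * x) ^ 2 * (54 * x * (1 + x) * u ^ 4) ^ 2 =
      108 * x * (1 + x) * (27 * x ^ 2 * u ^ 3) * (1 - 27 * x ^ 2 * u ^ 3) := by
  grind

theorem pullback_first_order_identity (x u : R) (hu : (1 - 2 * x) * u = 1) :
    x * (1 + x) * (1 - 8 * x) * (1 - 2 * x) ^ 2 *
        (54 * (1 + 2 * x) * u ^ 4 + 432 * x * (1 + x) * u ^ 5) +
      (1 - 2 * x) * (1 - 12 * x - 24 * x ^ 2 + 16 * x ^ 3) * (54 * x * (1 + x) * u ^ 4) =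
      108 * x * (1 + x) * (1 - 2 * (27 * x ^ 2 * u ^ 3)) := by
  grind

end Pullback

/-- `H(x) = ₂F₁([1/3,2/3],[1]; 27x²/(1-2x)³)` satisfies
`x(1+x)(1-8x)(1-2x)² H'' + (1-2x)(1-12x-24x²+16x³) H' - 24x(1+x) H = 0`. -/
theorem hyp2F1_pullback_ode :
    let H : ℚ⟦X⟧ := psComp hyp2F1 (27 * X ^ 2 * ((1 - 2 * X)⁻¹) ^ 3)
    X * (1 + X) * (1 - 8 * X) * (1 - 2 * X) ^ 2 * (derivative ℚ (derivative ℚ H)) +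
      (1 - 2 * X) * (1 - 12 * X - 24 * X ^ 2 + 16 * X ^ 3) * (derivative ℚ H) -
      24 * X * (1 + X) * H = 0 := by
  intro H
  set u : ℚ⟦X⟧ := (1 - 2 * X)⁻¹
  set g : ℚ⟦X⟧ := 27 * X ^ 2 * u ^ 3
  have hu : (1 - 2 * X) * u = 1 := PowerSeries.mul_inv_cancel _ (by simp)
  have hg0 : constantCoeff g = 0 := by simp [g]
  have hg : HasSubst g := HasSubst.of_constantCoeff_zero' hg0
  have hode : 9 * g * (1 - g) * (d⁄dX ℚ (d⁄dX ℚ hyp2F1)).subst g +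
      9 * (1 - 2 * g) * (d⁄dX ℚ hyp2F1).subst g - 2 * hyp2F1.subst g = 0 := by
    simpa only [map_sub, map_add, map_mul, map_one, map_ofNat, substAlgHom_X, coe_substAlgHom,
      map_zero] using congrArg (substAlgHom hg) hyp2F1_ode
  rw [show H = hyp2F1.subst g from psComp_eq_subst _ hg0, derivative_derivative_subst hg,
    derivative_subst hg, derivative_pullback, derivative_derivative_pullback]
  linear_combination 12 * X * (1 + X) * hode
    + (d⁄dX ℚ (d⁄dX ℚ hyp2F1)).subst g * pullback_leading_coeff_identity X u hu
    + (d⁄dX ℚ hyp2F1).subst g * pullback_first_order_identity X u hu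
end
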